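/- For every n ≥ 1, Σ_{k=0}^{2n} (2^k/k!)·(Hₖ′(0))² = (2n+1)!/(3·2^{2n−2}·n!·(n−1)!) (equivalently, the derivated Hermite kernels satisfy K₂ₙ₋₁^{(1,1)}(0,0) = K₂ₙ^{(1,1)}(0,0) = (2n+1)!/(3·√π·2^{2n−2}·n!·(n−1)!)); and for every n ≥ 2, Σ_{k=0}^{2n−1} (2^k/k!)·Hₖ(0)·Hₖ″(0) = −(2n−1)!/(3·2^{2n−4}·(n−1)!·(n−2)!) (equivalently, K₂ₙ₋₁^{(0,2)}(0,0) = −(2n−1)!/(3·√π·2^{2n−4}·(n−1)!·(n−2)!)). -/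

import Mathlib

open Polynomial Finset

/-- The monic Hermite polynomials: `H₀ = 1`, `H₁ = X`,
`H_{n+2} = X·H_{n+1} − ((n+1)/2)·Hₙ`. -/
noncomputable def hermiteM : ℕ → Polynomial ℝ
  | 0 => 1
  | 1 => X
  | n + 2 => X * hermiteM (n + 1) - C (((n : ℝ) + 1) / 2) * hermiteM n

/-- The squared norm of the `n`-th monic Hermite polynomial: `√π · n! / 2ⁿ`. -/
noncomputable def hermiteNormSq (n : ℕ) : ℝ :=
  Real.sqrt Real.pi * n.factorial / 2 ^ n

/-!
Differentiating the recurrence gives `H'_{n+1} = (n+1) H_n`, so all the derivatives at the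
origin are multiples of values `H_k(0)`. These vanish for odd `k`, and
`H_{j+2}(0) = -(j+1)/2 · H_j(0)` turns the normalised squares `2^{2j} H_{2j}(0)^2 / (2j)!` into
`binom(2j, j) / 4^j`. The `k = 2j+1` term of the first sum and the `k = 2j+2` term of the second
are then `± 2(2j+1) binom(2j, j) / 4^j`, and `(n+1) binom(2n+2, n+1) = 2(2n+1) binom(2n, n)`
sums these to `4n(2n+1) binom(2n, n) / (3·4^n)`.
-/

theorem sum_range_two_mul {M : Type*} [AddCommMonoid M] (f : ℕ → M) (n : ℕ) :
    ∑ k ∈ range (2 * n), f k = ∑ j ∈ range n, (f (2 * j) + f (2 * j + 1)) := by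
  induction n with
  | zero => simp
  | succ n ih => rw [mul_add_one, sum_range_succ, sum_range_succ, sum_range_succ, ih, add_assoc]

theorem cast_centralBinom_succ (n : ℕ) :
    ((n + 1).centralBinom : ℝ) = 2 * (2 * n + 1) * n.centralBinom / (n + 1) := by
  rw [eq_div_iff (by positivity)]
  exact_mod_cast (mul_comm _ _).trans (Nat.succ_mul_centralBinom_succ n)

theorem sum_range_mul_centralBinom_div_four_pow (n : ℕ) :
    ∑ j ∈ range n, 2 * (2 * (j : ℝ) + 1) * j.centralBinom / 4 ^ j
      = 4 * n * (2 * n + 1) * n.centralBinom / (3 * 4 ^ n) := by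
  induction n with
  | zero => simp
  | succ n ih =>
    rw [sum_range_succ, ih, cast_centralBinom_succ]
    push_cast
    field_simp
    ring

theorem mul_centralBinom_div_four_pow_eq_factorial (n : ℕ) (hn : 1 ≤ n) :
    4 * n * (2 * n + 1) * (n.centralBinom : ℝ) / (3 * 4 ^ n)
      = (2 * n + 1).factorial / (3 * 2 ^ (2 * n - 2) * n.factorial * (n - 1).factorial) := by
  obtain ⟨m, rfl⟩ := Nat.exists_eq_add_of_le' hn
  have hf : ((2 * (m + 1)).factorial : ℝ)
      = (m + 1).centralBinom * (m + 1).factorial * (m + 1).factorial := by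
    rw [Nat.centralBinom_eq_two_mul_choose, two_mul]
    exact_mod_cast (Nat.add_choose_mul_factorial_mul_factorial _ _).symm
  rw [show 2 * (m + 1) - 2 = 2 * m by omega, Nat.add_sub_cancel, Nat.factorial_succ (2 * (m + 1)),
    Nat.cast_mul, hf, Nat.factorial_succ m, pow_mul]
  push_cast
  field_simp
  ring

theorem derivative_hermiteM_succ :
    ∀ n : ℕ, derivative (hermiteM (n + 1)) = C ((n : ℝ) + 1) * hermiteM n
  | 0 => by simp [hermiteM]
  | 1 => by simp [hermiteM]; ring
  | n + 2 => by
    rw [hermiteM, derivative_sub, derivative_mul, derivative_X, derivative_C_mul,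
      derivative_hermiteM_succ (n + 1), derivative_hermiteM_succ n, hermiteM]
    simp only [C_mul', mul_sub, mul_smul_comm, one_mul]
    push_cast
    module

theorem derivative_hermiteM_succ_eval (n : ℕ) (x : ℝ) :
    (derivative (hermiteM (n + 1))).eval x = ((n : ℝ) + 1) * (hermiteM n).eval x := by
  simp [derivative_hermiteM_succ]

theorem derivative_derivative_hermiteM_add_two_eval (n : ℕ) (x : ℝ) :
    (derivative (derivative (hermiteM (n + 2)))).eval x
      = ((n : ℝ) + 2) * ((n : ℝ) + 1) * (hermiteM n).eval x := by
  simp [derivative_hermiteM_succ, derivative_mul]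
  ring

theorem hermiteM_eval_zero_add_two (n : ℕ) :
    (hermiteM (n + 2)).eval 0 = -(((n : ℝ) + 1) / 2) * (hermiteM n).eval 0 := by
  simp [hermiteM]

theorem hermiteM_eval_zero_odd (m : ℕ) : (hermiteM (2 * m + 1)).eval 0 = 0 := by
  induction m with
  | zero => simp [hermiteM]
  | succ m ih =>
    rw [show 2 * (m + 1) + 1 = 2 * m + 1 + 2 by ring, hermiteM_eval_zero_add_two, ih, mul_zero]

theorem derivative_hermiteM_eval_zero_even (m : ℕ) :
    (derivative (hermiteM (2 * m))).eval 0 = 0 := by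
  cases m with
  | zero => simp [hermiteM]
  | succ m =>
    rw [show 2 * (m + 1) = 2 * m + 1 + 1 by ring, derivative_hermiteM_succ_eval,
      hermiteM_eval_zero_odd, mul_zero]

theorem two_pow_div_factorial_mul_hermiteM_eval_zero_sq (j : ℕ) :
    (2 : ℝ) ^ (2 * j) / (2 * j).factorial * ((hermiteM (2 * j)).eval 0) ^ 2
      = j.centralBinom / 4 ^ j := by
  induction j with
  | zero => simp [hermiteM]
  | succ j ih =>
    have hstep : (2 : ℝ) ^ (2 * (j + 1)) / (2 * (j + 1)).factorial
          * ((hermiteM (2 * (j + 1))).eval 0) ^ 2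
        = (2 * j + 1) / (2 * j + 2)
          * ((2 : ℝ) ^ (2 * j) / (2 * j).factorial * ((hermiteM (2 * j)).eval 0) ^ 2) := by
      rw [show 2 * (j + 1) = 2 * j + 1 + 1 by ring, Nat.factorial_succ, Nat.factorial_succ,
        show 2 * j + 1 + 1 = 2 * j + 2 by ring, hermiteM_eval_zero_add_two]
      push_cast
      field_simp
      ring
    rw [hstep, ih, cast_centralBinom_succ]
    field_simp
    ring

theorem sum_range_two_mul_weighted_derivative_hermiteM_sq (n : ℕ) :
    ∑ k ∈ range (2 * n), (2 : ℝ) ^ k / k.factorial * ((derivative (hermiteM k)).eval 0) ^ 2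
      = ∑ j ∈ range n, 2 * (2 * (j : ℝ) + 1) * j.centralBinom / 4 ^ j := by
  rw [sum_range_two_mul]
  refine sum_congr rfl fun j _ => ?_
  rw [derivative_hermiteM_eval_zero_even, derivative_hermiteM_succ_eval, mul_div_assoc,
    ← two_pow_div_factorial_mul_hermiteM_eval_zero_sq, Nat.factorial_succ, pow_succ]
  push_cast
  field_simp
  ring

theorem sum_range_two_mul_add_one_weighted_derivative_hermiteM_sq (n : ℕ) :
    ∑ k ∈ range (2 * n + 1),
        (2 : ℝ) ^ k / k.factorial * ((derivative (hermiteM k)).eval 0) ^ 2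
      = ∑ j ∈ range n, 2 * (2 * (j : ℝ) + 1) * j.centralBinom / 4 ^ j := by
  rw [sum_range_succ, derivative_hermiteM_eval_zero_even,
    sum_range_two_mul_weighted_derivative_hermiteM_sq]
  ring

theorem sum_range_two_mul_add_two_weighted_hermiteM_mul_second_derivative (n : ℕ) :
    ∑ k ∈ range (2 * n + 2), (2 : ℝ) ^ k / k.factorial * (hermiteM k).eval 0 *
        (derivative (derivative (hermiteM k))).eval 0
      = -∑ j ∈ range n, 2 * (2 * (j : ℝ) + 1) * j.centralBinom / 4 ^ j := by
  rw [show 2 * n + 2 = 2 * (n + 1) by ring, sum_range_two_mul, sum_range_succ',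
    ← sum_neg_distrib]
  have h1 : (hermiteM 1).eval 0 = 0 := hermiteM_eval_zero_odd 0
  have h0 : (derivative (derivative (hermiteM 0))).eval 0 = 0 := by simp [hermiteM]
  simp only [mul_zero, h1, h0, zero_mul, add_zero]
  refine sum_congr rfl fun j _ => ?_
  rw [hermiteM_eval_zero_odd, mul_zero, zero_mul, add_zero,
    show 2 * (j + 1) = 2 * j + 2 by ring, derivative_derivative_hermiteM_add_two_eval,
    hermiteM_eval_zero_add_two, mul_div_assoc, ← two_pow_div_factorial_mul_hermiteM_eval_zero_sq,
    Nat.factorial_succ, Nat.factorial_succ, pow_succ, pow_succ]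
  push_cast
  field_simp
  ring

theorem div_hermiteNormSq (k : ℕ) (x : ℝ) :
    x / hermiteNormSq k = (2 : ℝ) ^ k / k.factorial * x / Real.sqrt Real.pi := by
  rw [hermiteNormSq]
  field_simp

theorem stmt18 :
    (∀ n : ℕ, 1 ≤ n →
      (∑ k ∈ range (2 * n + 1),
          (2 : ℝ) ^ k / k.factorial * ((derivative (hermiteM k)).eval 0) ^ 2 =
        (2 * n + 1).factorial / (3 * 2 ^ (2 * n - 2) * n.factorial * (n - 1).factorial)) ∧
      (∑ k ∈ range (2 * n),
          (2 : ℝ) ^ k / k.factorial * ((derivative (hermiteM k)).eval 0) ^ 2 =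
        (2 * n + 1).factorial / (3 * 2 ^ (2 * n - 2) * n.factorial * (n - 1).factorial)) ∧
      (∑ k ∈ range (2 * n + 1),
          ((derivative (hermiteM k)).eval 0) ^ 2 / hermiteNormSq k =
        (2 * n + 1).factorial /
          (3 * Real.sqrt Real.pi * 2 ^ (2 * n - 2) * n.factorial * (n - 1).factorial)) ∧
      (∑ k ∈ range (2 * n),
          ((derivative (hermiteM k)).eval 0) ^ 2 / hermiteNormSq k =
        (2 * n + 1).factorial /
          (3 * Real.sqrt Real.pi * 2 ^ (2 * n - 2) * n.factorial * (n - 1).factorial))) ∧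
    (∀ n : ℕ, 2 ≤ n →
      (∑ k ∈ range (2 * n),
          (2 : ℝ) ^ k / k.factorial * (hermiteM k).eval 0 *
            (derivative (derivative (hermiteM k))).eval 0 =
        -((2 * n - 1).factorial /
          (3 * 2 ^ (2 * n - 4) * (n - 1).factorial * (n - 2).factorial))) ∧
      (∑ k ∈ range (2 * n),
          (hermiteM k).eval 0 * (derivative (derivative (hermiteM k))).eval 0 /
            hermiteNormSq k =
        -((2 * n - 1).factorial /
          (3 * Real.sqrt Real.pi * 2 ^ (2 * n - 4) * (n - 1).factorial *
            (n - 2).factorial)))) := by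
  refine ⟨fun n hn => ?_, fun n hn => ?_⟩
  · have hodd := sum_range_two_mul_add_one_weighted_derivative_hermiteM_sq n
    have heven := sum_range_two_mul_weighted_derivative_hermiteM_sq n
    rw [sum_range_mul_centralBinom_div_four_pow,
      mul_centralBinom_div_four_pow_eq_factorial n hn] at hodd heven
    refine ⟨hodd, heven, ?_, ?_⟩ <;>
      simp only [div_hermiteNormSq, ← sum_div, hodd, heven] <;> ring
  · obtain ⟨m, rfl⟩ : ∃ m, n = m + 1 := ⟨n - 1, by omega⟩
    have h := sum_range_two_mul_add_two_weighted_hermiteM_mul_second_derivative m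
    rw [sum_range_mul_centralBinom_div_four_pow,
      mul_centralBinom_div_four_pow_eq_factorial m (by omega)] at h
    rw [show 2 * (m + 1) = 2 * m + 2 by ring, show 2 * m + 2 - 1 = 2 * m + 1 by omega,
      show 2 * m + 2 - 4 = 2 * m - 2 by omega, Nat.add_sub_cancel, show m + 1 - 2 = m - 1 by omega]
    refine ⟨h, ?_⟩
    simp only [div_hermiteNormSq, ← mul_assoc, ← sum_div, h]
    ring
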